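/- Two-stage regression identity for a binary unmeasured confounder (final identity of Supplement S6): Let U and W be {0,1}-valued random variables, let V be a nonnegative real random variable taking finitely many values, let a, c : 𝒳 → ℝ, λ > 0, β ∈ ℝ, b ∈ ℝ with b ≠ 0, and suppose that for every (r, z, x, u) with P(R = r, Z = z, X = x, U = u) > 0: E[ V | R = r, Z = z, X = x, U = u ] = λ·exp( a(x) + β·u ) and P( W = 1 | R = r, Z = z, X = x, U = u ) = exp( c(x) + b·u ). Then, with α := ( exp(β) − 1 )/( exp(b) − 1 ), for every (r, z, x) with P(R = r, Z = z, X = x) > 0: E[ V | R = r, Z = z, X = x ] = λ·exp( a(x) )·( α·P( W = 1 | R = r, Z = z, X = x )·exp(−c(x)) + 1 − α ). -/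

import Mathlib

open Finset

noncomputable section

open scoped Classical

variable {Ω : Type*} [Fintype Ω]

/-- Probability of an event `A` under the weight function `p`. -/
def pr (p : Ω → ℝ) (A : Ω → Prop) : ℝ := ∑ ω, if A ω then p ω else 0

/-- Expectation of a real random variable `Y` under the weight function `p`. -/
def ex (p : Ω → ℝ) (Y : Ω → ℝ) : ℝ := ∑ ω, p ω * Y ω

/-- Conditional probability `P(A | B)`. -/
def cpr (p : Ω → ℝ) (A B : Ω → Prop) : ℝ := pr p (fun ω => A ω ∧ B ω) / pr p B

/-- Conditional expectation `E[Y | B]`. -/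
def cex (p : Ω → ℝ) (Y : Ω → ℝ) (B : Ω → Prop) : ℝ :=
  (∑ ω, if B ω then p ω * Y ω else 0) / pr p B

lemma pr_nonneg (p : Ω → ℝ) (hp : ∀ ω, 0 ≤ p ω) (A : Ω → Prop) : 0 ≤ pr p A := by
  apply Finset.sum_nonneg
  intro ω _
  split <;> simp [hp ω]

lemma pr_zero_p (p : Ω → ℝ) (hp : ∀ ω, 0 ≤ p ω) (A : Ω → Prop) (h : pr p A = 0) :
    ∀ ω, A ω → p ω = 0 := by
  intro ω hω
  have := (Finset.sum_eq_zero_iff_of_nonneg (fun ω _ => by split <;> simp [hp ω])).mp h ω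
    (Finset.mem_univ ω)
  simpa [hω] using this

/-- Numerator of a conditional expectation. -/
def sV (p : Ω → ℝ) (V : Ω → ℝ) (A : Ω → Prop) : ℝ := ∑ ω, if A ω then p ω * V ω else 0

lemma cex_eq (p : Ω → ℝ) (V : Ω → ℝ) (A : Ω → Prop) : cex p V A = sV p V A / pr p A := rfl

/-- Two-stage regression identity for a binary unmeasured confounder
(final identity of Supplement S6). -/
theorem two_stage_identity_binary_U
    {𝒳 𝒵 : Type*} [Fintype 𝒳] [Fintype 𝒵]
    (p : Ω → ℝ) (hp : ∀ ω, 0 ≤ p ω) (hp1 : ∑ ω, p ω = 1)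
    (R : Ω → Bool) (X : Ω → 𝒳) (Z : Ω → 𝒵)
    (U W : Ω → Bool)
    (V : Ω → ℝ) (hV0 : ∀ ω, 0 ≤ V ω)
    (a c : 𝒳 → ℝ) (lam : ℝ) (hlam : 0 < lam) (β b : ℝ) (hb : b ≠ 0)
    (hVmodel : ∀ (r : Bool) (z : 𝒵) (x : 𝒳) (u : Bool),
      0 < pr p (fun ω => R ω = r ∧ Z ω = z ∧ X ω = x ∧ U ω = u) →
      cex p V (fun ω => R ω = r ∧ Z ω = z ∧ X ω = x ∧ U ω = u)
        = lam * Real.exp (a x + β * (if u then (1 : ℝ) else 0)))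
    (hWmodel : ∀ (r : Bool) (z : 𝒵) (x : 𝒳) (u : Bool),
      0 < pr p (fun ω => R ω = r ∧ Z ω = z ∧ X ω = x ∧ U ω = u) →
      cpr p (fun ω => W ω = true) (fun ω => R ω = r ∧ Z ω = z ∧ X ω = x ∧ U ω = u)
        = Real.exp (c x + b * (if u then (1 : ℝ) else 0))) :
    ∀ (r : Bool) (z : 𝒵) (x : 𝒳), 0 < pr p (fun ω => R ω = r ∧ Z ω = z ∧ X ω = x) →
      cex p V (fun ω => R ω = r ∧ Z ω = z ∧ X ω = x)
        = lam * Real.exp (a x)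
          * (((Real.exp β - 1) / (Real.exp b - 1))
              * cpr p (fun ω => W ω = true) (fun ω => R ω = r ∧ Z ω = z ∧ X ω = x)
              * Real.exp (-(c x))
            + 1 - (Real.exp β - 1) / (Real.exp b - 1)) := by
  intro r z x hB
  have cex_rw := cex_eq (Ω := Ω) p V
  set B : Ω → Prop := fun ω => R ω = r ∧ Z ω = z ∧ X ω = x with hBdef
  set Bu : Bool → Ω → Prop := fun u ω => R ω = r ∧ Z ω = z ∧ X ω = x ∧ U ω = u with hBudef
  have hnum : ∀ u : Bool, sV p V (Bu u)
      = lam * Real.exp (a x + β * (if u then (1:ℝ) else 0)) * pr p (Bu u) := by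
    intro u
    rcases lt_or_eq_of_le (pr_nonneg p hp (Bu u)) with hpos | hzero
    · have h := hVmodel r z x u hpos
      rw [cex_rw, div_eq_iff hpos.ne'] at h
      exact h
    · have hz := pr_zero_p p hp (Bu u) hzero.symm
      rw [← hzero, mul_zero, sV]
      apply Finset.sum_eq_zero
      intro ω _
      split
      · rename_i h; rw [hz ω h]; ring
      · rfl
  have hW : ∀ u : Bool, pr p (fun ω => W ω = true ∧ Bu u ω)
      = Real.exp (c x + b * (if u then (1:ℝ) else 0)) * pr p (Bu u) := by
    intro u
    rcases lt_or_eq_of_le (pr_nonneg p hp (Bu u)) with hpos | hzero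
    · have h := hWmodel r z x u hpos
      rw [cpr, div_eq_iff hpos.ne'] at h
      exact h
    · have hz := pr_zero_p p hp (Bu u) hzero.symm
      rw [← hzero, mul_zero, pr]
      apply Finset.sum_eq_zero
      intro ω _
      split
      · rename_i h; exact hz ω h.2
      · rfl
  have hsplitP : pr p B = pr p (Bu false) + pr p (Bu true) := by
    rw [pr, pr, pr, ← Finset.sum_add_distrib]
    apply Finset.sum_congr rfl
    intro ω _
    simp only [hBdef, hBudef]
    by_cases hω : R ω = r ∧ Z ω = z ∧ X ω = x
    · obtain ⟨h1, h2, h3⟩ := hω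
      rcases Bool.eq_false_or_eq_true (U ω) with hu | hu <;> simp [h1, h2, h3, hu]
    · rw [if_neg hω, if_neg (fun h => hω ⟨h.1, h.2.1, h.2.2.1⟩),
        if_neg (fun h => hω ⟨h.1, h.2.1, h.2.2.1⟩)]
      ring
  have hsplitV : sV p V B = sV p V (Bu false) + sV p V (Bu true) := by
    rw [sV, sV, sV, ← Finset.sum_add_distrib]
    apply Finset.sum_congr rfl
    intro ω _
    simp only [hBdef, hBudef]
    by_cases hω : R ω = r ∧ Z ω = z ∧ X ω = x
    · obtain ⟨h1, h2, h3⟩ := hω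
      rcases Bool.eq_false_or_eq_true (U ω) with hu | hu <;> simp [h1, h2, h3, hu]
    · rw [if_neg hω, if_neg (fun h => hω ⟨h.1, h.2.1, h.2.2.1⟩),
        if_neg (fun h => hω ⟨h.1, h.2.1, h.2.2.1⟩)]
      ring
  have hsplitW : pr p (fun ω => W ω = true ∧ B ω)
      = pr p (fun ω => W ω = true ∧ Bu false ω) + pr p (fun ω => W ω = true ∧ Bu true ω) := by
    rw [pr, pr, pr, ← Finset.sum_add_distrib]
    apply Finset.sum_congr rfl
    intro ω _
    simp only [hBdef, hBudef]
    by_cases hω : W ω = true ∧ R ω = r ∧ Z ω = z ∧ X ω = x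
    · obtain ⟨h0, h1, h2, h3⟩ := hω
      rcases Bool.eq_false_or_eq_true (U ω) with hu | hu <;> simp [h0, h1, h2, h3, hu]
    · rw [if_neg hω, if_neg (fun h => hω ⟨h.1, h.2.1, h.2.2.1, h.2.2.2.1⟩),
        if_neg (fun h => hω ⟨h.1, h.2.1, h.2.2.1, h.2.2.2.1⟩)]
      ring
  have hEb : Real.exp b - 1 ≠ 0 := by
    intro h
    apply hb
    have : Real.exp b = Real.exp 0 := by rw [Real.exp_zero]; linarith
    exact Real.exp_eq_exp.mp this
  have hpB : pr p B ≠ 0 := hB.ne'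
  rw [cex_rw, cpr, hsplitV, hsplitW, hnum false, hnum true, hW false, hW true, hsplitP]
  have hpB' : pr p (Bu false) + pr p (Bu true) ≠ 0 := by rw [← hsplitP]; exact hpB
  simp only [Bool.false_eq_true, ↓reduceIte, if_true, if_false, mul_one, mul_zero, add_zero, Real.exp_add, Real.exp_neg]
  field_simp
  ring
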